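/- Assumptions and notation as in the Section 4 construction: (W,S) is an irreducible Coxeter system of finite rank with m_{st} < ∞ for all s,t ∈ S, whose Coxeter graph G is not a tree, with fixed s_1, s_2 ∈ S such that m := m_{s_1s_2} ≥ 4; p : G′ → G is the universal covering with fixed edge {s_1′, s_2′} over {s_1, s_2}, and V = ⊕_{a∈S′} ℂ α_a is the resulting representation of W. Let V_0 := {v ∈ V : s·v = v for all s ∈ S}, let d(a,b) denote the distance between vertices a,b in the tree G′, let S_1′ := {a ∈ S′ : d(a,s_1′) < d(a,s_2′)}, and let V_1 := ⊕_{a∈S_1′} ℂ α_a. If m = 4, then V_1 is a W-subrepresentation of V, and for every v_1 ∈ V_1 ∖ V_0 the W-subrepresentation generated by v_1 is all of V_1. -/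

import Mathlib

/-!
With `m = 4` the coupling `2 cos(2π/m)` between `α_{s₁′}` and `α_{s₂′}` vanishes, and in the tree
`G′` the only edge leaving `S₁′` is `s₁′s₂′`; so `V₁` is stable under every `s ∈ S`.

Moreover `(s - 1)v` lies in the span of the `α_a` with `a ∈ S₁′ ∩ p⁻¹(s)`. On such a fibre vector,
`t - 1` (for `t` adjacent to `s`) multiplies by the nonzero constant `2 cos(π/m_{st})` and moves
each point of the support to its neighbour over `t`, injectively because `p` is a covering.
Moving a point of the support step by step to `s₁′`, and then applying `s₂ - 1`, which kills
`α_{s₁′}`, shortens the support; hence the subrepresentation generated by a non-fixed vector of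
`V₁` contains `α_{s₁′}`, and then every `α_a` with `a ∈ S₁′`, by walking away from `s₁′` in `G′`.
-/

/-- The Coxeter graph of a Coxeter matrix `M`: two distinct vertices `s, t` are adjacent iff
`M s t ≥ 3` or `M s t = ∞` (encoded as `0` in Mathlib), i.e. iff `M s t ≠ 2`. -/
def coxeterGraph {B : Type*} (M : CoxeterMatrix B) : SimpleGraph B where
  Adj s t := s ≠ t ∧ M s t ≠ 2
  symm := by
    constructor
    intro s t h
    exact ⟨h.1.symm, by rw [M.symmetric]; exact h.2⟩
  loopless := by constructor; intro s h; exact h.1 rfl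

open Finsupp Classical in
/-- The Section 4 operators: for each `s ∈ S`, a linear operator on `V = ⊕_{a ∈ S′} ℂ α_a`,
where `S′` is the vertex set of the universal covering `p : G′ → G` of the Coxeter graph `G`,
and `α_a = Finsupp.single a 1`.  Here `{s₁′, s₂′}` is the fixed edge of `G′` over the edge
`{s₁, s₂}` of `G` (with `m = m_{s₁s₂} ≥ 4`).  The defining formulas are:
(i) if `p a = s` then `s·α_a = −α_a`;
(ii) `s₁·α_{s₂′} = α_{s₂′} + 2cos(2π/m) α_{s₁′}` and `s₂·α_{s₁′} = α_{s₁′} + 2cos(2π/m) α_{s₂′}`;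
(iii) otherwise, if `s` is not adjacent to `p a` in `G` (equivalently, under the covering
hypotheses, `a` has no neighbour in `G′` lying over `s`), then `s·α_a = α_a`;
(iv) otherwise `s·α_a = α_a + 2cos(π/m_{s,p(a)}) α_b`, where `b` is the unique neighbour of `a`
in `G′` with `p b = s`. -/
noncomputable def sec4Act {B B' : Type*} (M : CoxeterMatrix B) (G' : SimpleGraph B')
    (p : B' → B) (s₁ s₂ : B) (s₁' s₂' : B') (s : B) : (B' →₀ ℂ) →ₗ[ℂ] (B' →₀ ℂ) :=
  Finsupp.lift _ ℂ _ fun a =>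
    if p a = s then -single a 1
    else if s = s₁ ∧ a = s₂' then
      single s₂' 1 + (2 * Real.cos (2 * Real.pi / (M s₁ s₂ : ℝ)) : ℂ) • single s₁' 1
    else if s = s₂ ∧ a = s₁' then
      single s₁' 1 + (2 * Real.cos (2 * Real.pi / (M s₁ s₂ : ℝ)) : ℂ) • single s₂' 1
    else if h : ∃ b, G'.Adj a b ∧ p b = s then
      single a 1 + (2 * Real.cos (Real.pi / (M s (p a) : ℝ)) : ℂ) • single h.choose 1
    else single a 1

/-- The subspace of vectors fixed by all the operators `σ s`. -/
def fixedSubmodule {B V : Type*} [AddCommGroup V] [Module ℂ V]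
    (σ : B → V →ₗ[ℂ] V) : Submodule ℂ V where
  carrier := {v | ∀ s, σ s v = v}
  add_mem' := by
    intro a b ha hb s
    simp [map_add, ha s, hb s]
  zero_mem' := by intro s; simp
  smul_mem' := by
    intro c a ha s
    simp [map_smul, ha s]

open SimpleGraph Finsupp

section Tree

variable {V : Type*} {G : SimpleGraph V}

def nearSide (G : SimpleGraph V) (u v : V) : Set V := {a | G.dist a u < G.dist a v}

theorem notMem_nearSide_right (u v : V) : v ∉ nearSide G u v := by
  simp [nearSide]

theorem SimpleGraph.Connected.exists_adj_dist_add_one_eq (hG : G.Connected) {a r : V}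
    (h : a ≠ r) : ∃ c, G.Adj a c ∧ G.dist c r + 1 = G.dist a r := by
  obtain ⟨q, hq⟩ := hG.exists_walk_length_eq_dist a r
  cases q with
  | nil => exact absurd rfl h
  | cons hac q =>
    refine ⟨_, hac, le_antisymm ?_ ?_⟩
    · rw [← hq, Walk.length_cons]
      exact Nat.add_le_add_right (dist_le q) 1
    · calc G.dist a r ≤ G.dist a _ + G.dist _ r := hG.dist_triangle
        _ = _ := by rw [dist_eq_one_iff_adj.mpr hac, add_comm]

theorem SimpleGraph.Walk.dist_left_le_length [DecidableEq V] {u v w : V} (q : G.Walk u v)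
    (hw : w ∈ q.support) : G.dist w v ≤ q.length :=
  (dist_le _).trans (q.length_dropUntil_le_length hw)

theorem SimpleGraph.Walk.dist_right_le_length [DecidableEq V] {u v w : V} (q : G.Walk u v)
    (hw : w ∈ q.support) : G.dist u w ≤ q.length :=
  (dist_le _).trans (q.length_takeUntil_le_length hw)

/- Distances to the ends of an edge differ by one, which pins down all four distances; if `b ≠ v`,
a shortest path from `a` to `u` followed by `uv` and the edge `ab` followed by a shortest path
from `b` to `v` are two paths from `a` to `v`, and the first is too short to pass through `b`. -/
theorem SimpleGraph.IsTree.eq_of_adj_of_mem_nearSide (hG : G.IsTree) {u v a b : V}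
    (huv : G.Adj u v) (hab : G.Adj a b) (ha : a ∈ nearSide G u v) (hb : b ∉ nearSide G u v) :
    a = u ∧ b = v := by
  classical
  simp only [nearSide, Set.mem_ofPred_eq, not_lt] at ha hb
  have hau := hG.dist_eq_dist_add_one_of_adj a huv
  have hbu := hG.dist_eq_dist_add_one_of_adj b huv
  have hua := hG.dist_eq_dist_add_one_of_adj u hab
  have hva := hG.dist_eq_dist_add_one_of_adj v hab
  rw [dist_comm, dist_comm (u := u)] at hua
  rw [dist_comm, dist_comm (u := v)] at hva
  suffices hbv : b = v by
    have hbv' : G.dist b v = 0 := by rw [hbv, dist_self]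
    exact ⟨hG.connected.dist_eq_zero_iff.mp (by omega), hbv⟩
  by_contra hbv
  have hbv' : 0 < G.dist b v := hG.connected.pos_dist_of_ne hbv
  obtain ⟨Q, hQ, hQlen⟩ := hG.connected.exists_path_of_dist a u
  obtain ⟨P, hP, hPlen⟩ := hG.connected.exists_path_of_dist b v
  have hvQ : v ∉ Q.support := fun hv => by have := Q.dist_right_le_length hv; omega
  have haP : a ∉ P.support := fun ha => by have := P.dist_left_le_length ha; omega
  have hpaths : Q.concat huv = Walk.cons hab P := congrArg Subtype.val
    ((hG.isAcyclic.subsingleton_path a v).elim ⟨_, hQ.concat hvQ huv⟩ ⟨_, hP.cons haP⟩)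
  have hbQ : b ∈ Q.support := by
    have hb : b ∈ (Q.concat huv).support := by simp [hpaths]
    simpa [Walk.support_concat, hbv] using hb
  have := Q.dist_left_le_length hbQ
  omega

end Tree

section Covering

variable {V V' : Type*} {G : SimpleGraph V} {G' : SimpleGraph V'} {p : V' → V}

def IsGraphCovering (G' : SimpleGraph V') (G : SimpleGraph V) (p : V' → V) : Prop :=
  ∀ a, Set.BijOn p (G'.neighborSet a) (G.neighborSet (p a))

open Classical in
/-- The vertex `b` of rule (iv): the neighbour of `a` lying over `t` (junk value `a` if there is
none). -/
noncomputable def neighborOver (G' : SimpleGraph V') (p : V' → V) (a : V') (t : V) : V' :=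
  if h : ∃ b, G'.Adj a b ∧ p b = t then h.choose else a

theorem IsGraphCovering.adj (hp : IsGraphCovering G' G p) {a b : V'} (hab : G'.Adj a b) :
    G.Adj (p a) (p b) :=
  (hp a).mapsTo hab

theorem IsGraphCovering.adj_neighborOver (hp : IsGraphCovering G' G p) {a : V'} {t : V}
    (ht : G.Adj (p a) t) :
    G'.Adj a (neighborOver G' p a t) ∧ p (neighborOver G' p a t) = t := by
  have h : ∃ b, G'.Adj a b ∧ p b = t := (hp a).surjOn ht
  rw [neighborOver, dif_pos h]
  exact h.choose_spec

theorem IsGraphCovering.neighborOver_eq (hp : IsGraphCovering G' G p) {a b : V'}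
    (hab : G'.Adj a b) : neighborOver G' p a (p b) = b :=
  let hb := hp.adj_neighborOver (hp.adj hab)
  (hp a).injOn hb.1 hab hb.2

theorem IsGraphCovering.injOn_neighborOver (hp : IsGraphCovering G' G p) {s t : V}
    (hst : G.Adj s t) : Set.InjOn (neighborOver G' p · t) (p ⁻¹' {s}) := by
  intro a ha a' ha' (h : neighborOver G' p a t = neighborOver G' p a' t)
  have hc := hp.adj_neighborOver (show G.Adj (p a) t from ha ▸ hst)
  have hc' := hp.adj_neighborOver (show G.Adj (p a') t from ha' ▸ hst)
  rw [← h] at hc'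
  exact (hp _).injOn hc.1.symm hc'.1.symm (ha.trans ha'.symm)

theorem IsGraphCovering.support_mapDomain_neighborOver [DecidableEq V'] {R : Type*}
    [AddCommMonoid R] (hp : IsGraphCovering G' G p) {s t : V} (hst : G.Adj s t) {w : V' →₀ R}
    (hw : ↑w.support ⊆ p ⁻¹' {s}) :
    (mapDomain (neighborOver G' p · t) w).support = w.support.image (neighborOver G' p · t) :=
  mapDomain_support_of_injOn w ((hp.injOn_neighborOver hst).mono hw)

theorem IsGraphCovering.card_support_mapDomain_neighborOver {R : Type*} [AddCommMonoid R]
    (hp : IsGraphCovering G' G p) {s t : V} (hst : G.Adj s t) {w : V' →₀ R}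
    (hw : ↑w.support ⊆ p ⁻¹' {s}) :
    (mapDomain (neighborOver G' p · t) w).support.card = w.support.card := by
  classical
  rw [hp.support_mapDomain_neighborOver hst hw]
  exact Finset.card_image_of_injOn ((hp.injOn_neighborOver hst).mono hw)

end Covering

theorem cos_pi_div_pos_of_coxeterGraph_adj {B : Type*} {M : CoxeterMatrix B}
    (hfin : ∀ s t : B, M s t ≠ 0) {s t : B} (h : (coxeterGraph M).Adj s t) :
    0 < Real.cos (Real.pi / M s t) := by
  have h3 : (3 : ℝ) ≤ M s t := by
    have := M.off_diagonal s t h.1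
    have := hfin s t
    exact_mod_cast (show 3 ≤ M s t by have := h.2; omega)
  apply Real.cos_pos_of_mem_Ioo
  constructor
  · linarith [show 0 < Real.pi / M s t by positivity, Real.pi_pos]
  · exact div_lt_div_of_pos_left Real.pi_pos (by norm_num) (by linarith)

theorem Finsupp.linearMap_apply_sub_self_eq_sum {α R : Type*} [Ring R]
    {L : (α →₀ R) →ₗ[R] (α →₀ R)} (v : α →₀ R) :
    L v - v = v.sum fun a c => c • (L (single a 1) - single a 1) := by
  conv_lhs => rw [← v.sum_single]
  rw [map_finsuppSum, ← Finsupp.sum_sub]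
  refine Finsupp.sum_congr fun a _ => ?_
  rw [← smul_single_one, map_smul, smul_sub]

section Sec4

variable {B B' : Type*} {M : CoxeterMatrix B} {G' : SimpleGraph B'} {p : B' → B}
  {s₁ s₂ : B} {s₁' s₂' : B'}

local notation "σ" => sec4Act M G' p s₁ s₂ s₁' s₂'

local notation "S₁'" => nearSide G' s₁' s₂'

open Classical in
theorem sec4Act_single (s : B) (a : B') :
    σ s (single a 1) =
      if p a = s then -single a 1
      else if s = s₁ ∧ a = s₂' then
        single s₂' 1 + (2 * Real.cos (2 * Real.pi / (M s₁ s₂ : ℝ)) : ℂ) • single s₁' 1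
      else if s = s₂ ∧ a = s₁' then
        single s₁' 1 + (2 * Real.cos (2 * Real.pi / (M s₁ s₂ : ℝ)) : ℂ) • single s₂' 1
      else if h : ∃ b, G'.Adj a b ∧ p b = s then
        single a 1 + (2 * Real.cos (Real.pi / (M s (p a) : ℝ)) : ℂ) • single h.choose 1
      else single a 1 := by
  simp only [sec4Act, lift_apply]
  refine (sum_single_index ?_).trans (one_smul ℂ _)
  exact zero_smul ℂ _

theorem sec4Act_single_of_adj (hp : IsGraphCovering G' (coxeterGraph M) p) {a : B'} {t : B}
    (ht : (coxeterGraph M).Adj (p a) t) (ha : a ≠ s₂') (hcut : ¬(t = s₂ ∧ a = s₁')) :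
    σ t (single a 1) - single a 1 =
      (2 * Real.cos (Real.pi / M t (p a)) : ℂ) • single (neighborOver G' p a t) 1 := by
  have hex : ∃ b, G'.Adj a b ∧ p b = t := (hp a).surjOn ht
  rw [sec4Act_single, if_neg ht.ne, if_neg (fun h => ha h.2), if_neg hcut, dif_pos hex,
    add_sub_cancel_left, neighborOver, dif_pos hex]

theorem sec4Act_single_cut (hm4 : M s₁ s₂ = 4) (hp₁ : p s₁' = s₁) :
    σ s₂ (single s₁' 1) = single s₁' 1 := by
  have hs : s₁ ≠ s₂ := fun h => by simp [h] at hm4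
  have hcos : Real.cos (2 * Real.pi / (M s₁ s₂ : ℝ)) = 0 := by
    rw [hm4, ← Real.cos_pi_div_two]
    push_cast
    ring_nf
  rw [sec4Act_single, hp₁, if_neg hs, if_neg (fun h => hs h.1.symm), if_pos ⟨rfl, rfl⟩, hcos]
  simp

theorem sec4Act_single_sub_single_mem (htree : G'.IsTree) (hedge : G'.Adj s₁' s₂')
    (hp₁ : p s₁' = s₁) (hp₂ : p s₂' = s₂) (hm4 : M s₁ s₂ = 4) (s : B) {a : B'} (ha : a ∈ S₁') :
    σ s (single a 1) - single a 1 ∈ supported ℂ ℂ (S₁' ∩ p ⁻¹' {s}) := by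
  by_cases hcut : s = s₂ ∧ a = s₁'
  · obtain ⟨rfl, rfl⟩ := hcut
    rw [sec4Act_single_cut hm4 hp₁, sub_self]
    exact zero_mem _
  rw [sec4Act_single]
  split_ifs with hpa h₂ hb
  · rw [← neg_add', ← two_smul ℂ]
    exact neg_mem (Submodule.smul_mem _ _ (single_mem_supported ℂ 1 ⟨ha, hpa⟩))
  · exact absurd (h₂.2 ▸ ha) (notMem_nearSide_right _ _)
  · rw [add_sub_cancel_left]
    refine Submodule.smul_mem _ _ (single_mem_supported ℂ 1 ⟨?_, hb.choose_spec.2⟩)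
    by_contra hout
    obtain ⟨rfl, hb₂⟩ := htree.eq_of_adj_of_mem_nearSide hedge hb.choose_spec.1 ha hout
    exact hcut ⟨by rw [← hb.choose_spec.2, hb₂, hp₂], rfl⟩
  · rw [sub_self]
    exact zero_mem _

theorem sec4Act_sub_self_mem (htree : G'.IsTree) (hedge : G'.Adj s₁' s₂')
    (hp₁ : p s₁' = s₁) (hp₂ : p s₂' = s₂) (hm4 : M s₁ s₂ = 4) (s : B) {v : B' →₀ ℂ}
    (hv : v ∈ supported ℂ ℂ S₁') :
    σ s v - v ∈ supported ℂ ℂ (S₁' ∩ p ⁻¹' {s}) := by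
  have hle : supported ℂ ℂ S₁' ≤
      (supported ℂ ℂ (S₁' ∩ p ⁻¹' {s})).comap (σ s - LinearMap.id) := by
    rw [supported_eq_span_single, Submodule.span_le]
    rintro _ ⟨a, ha, rfl⟩
    exact sec4Act_single_sub_single_mem htree hedge hp₁ hp₂ hm4 s ha
  exact hle hv

theorem sec4Act_mem_supported (htree : G'.IsTree) (hedge : G'.Adj s₁' s₂')
    (hp₁ : p s₁' = s₁) (hp₂ : p s₂' = s₂) (hm4 : M s₁ s₂ = 4) (s : B) {v : B' →₀ ℂ}
    (hv : v ∈ supported ℂ ℂ S₁') : σ s v ∈ supported ℂ ℂ S₁' := by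
  simpa using add_mem hv (supported_mono Set.inter_subset_left
    (sec4Act_sub_self_mem htree hedge hp₁ hp₂ hm4 s hv))

theorem sec4Act_sub_self_eq_smul_mapDomain (hp : IsGraphCovering G' (coxeterGraph M) p)
    {s t : B} (hst : (coxeterGraph M).Adj s t) {w : B' →₀ ℂ}
    (hw : w ∈ supported ℂ ℂ (S₁' ∩ p ⁻¹' {s})) (hcut : t = s₂ → s₁' ∉ w.support) :
    σ t w - w = (2 * Real.cos (Real.pi / M t s) : ℂ) • mapDomain (neighborOver G' p · t) w := by
  have hsingle : ∀ b ∈ w.support, σ t (single b 1) - single b 1 =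
      (2 * Real.cos (Real.pi / M t s) : ℂ) • single (neighborOver G' p b t) 1 := by
    intro b hb
    obtain ⟨hbS, hbs : p b = s⟩ := hw hb
    rw [← hbs]
    exact sec4Act_single_of_adj hp (hbs ▸ hst)
      (ne_of_mem_of_not_mem hbS (notMem_nearSide_right _ _)) (fun h => hcut h.1 (h.2 ▸ hb))
  rw [linearMap_apply_sub_self_eq_sum, mapDomain, Finsupp.smul_sum]
  refine Finsupp.sum_congr fun b hb => ?_
  rw [hsingle b hb, smul_comm, smul_single_one]

end Sec4

structure IsSec4Setup {B B' : Type*} (M : CoxeterMatrix B) (G' : SimpleGraph B') (p : B' → B)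
    (s₁ s₂ : B) (s₁' s₂' : B') : Prop where
  isTree : G'.IsTree
  covering : IsGraphCovering G' (coxeterGraph M) p
  adj : G'.Adj s₁' s₂'
  map₁ : p s₁' = s₁
  map₂ : p s₂' = s₂
  finite : ∀ s t : B, M s t ≠ 0
  eq_four : M s₁ s₂ = 4

namespace IsSec4Setup

variable {B B' : Type*} {M : CoxeterMatrix B} {G' : SimpleGraph B'} {p : B' → B}
  {s₁ s₂ : B} {s₁' s₂' : B'} {U : Submodule ℂ (B' →₀ ℂ)}

local notation "σ" => sec4Act M G' p s₁ s₂ s₁' s₂'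

local notation "S₁'" => nearSide G' s₁' s₂'

theorem coeff_ne_zero (h : IsSec4Setup M G' p s₁ s₂ s₁' s₂')
    {s t : B} (hst : (coxeterGraph M).Adj s t) :
    (2 * Real.cos (Real.pi / M t s) : ℂ) ≠ 0 :=
  mul_ne_zero two_ne_zero
    (Complex.ofReal_ne_zero.mpr (cos_pi_div_pos_of_coxeterGraph_adj h.finite hst.symm).ne')

theorem mapDomain_neighborOver_mem_supported (h : IsSec4Setup M G' p s₁ s₂ s₁' s₂')
    {s t : B} (hst : (coxeterGraph M).Adj s t)
    {w : B' →₀ ℂ} (hw : w ∈ supported ℂ ℂ (S₁' ∩ p ⁻¹' {s})) (hcut : t = s₂ → s₁' ∉ w.support) :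
    mapDomain (neighborOver G' p · t) w ∈ supported ℂ ℂ (S₁' ∩ p ⁻¹' {t}) := by
  classical
  rw [mem_supported]
  refine (Finset.coe_subset.mpr mapDomain_support).trans ?_
  intro _ hx
  obtain ⟨b, hb, rfl⟩ := Finset.mem_image.mp hx
  obtain ⟨hbS, hbs : p b = s⟩ := hw hb
  obtain ⟨hadj, hpt⟩ := h.covering.adj_neighborOver (hbs ▸ hst)
  refine ⟨?_, hpt⟩
  by_contra hout
  obtain ⟨rfl, h₂⟩ := h.isTree.eq_of_adj_of_mem_nearSide h.adj hadj hbS hout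
  exact hcut (by rw [← hpt, h₂, h.map₂]) hb

theorem mapDomain_neighborOver_mem (h : IsSec4Setup M G' p s₁ s₂ s₁' s₂')
    {s t : B} (hst : (coxeterGraph M).Adj s t) {w : B' →₀ ℂ}
    (hw : w ∈ supported ℂ ℂ (S₁' ∩ p ⁻¹' {s})) (hcut : t = s₂ → s₁' ∉ w.support)
    (hwU : σ t w - w ∈ U) : mapDomain (neighborOver G' p · t) w ∈ U := by
  rw [sec4Act_sub_self_eq_smul_mapDomain h.covering hst hw hcut] at hwU
  exact (Submodule.smul_mem_iff U (h.coeff_ne_zero hst)).mp hwU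

theorem exists_mem_support_start (h : IsSec4Setup M G' p s₁ s₂ s₁' s₂')
    (hU : ∀ s, ∀ v ∈ U, σ s v ∈ U) {s : B} {w : B' →₀ ℂ}
    (hwU : w ∈ U) (hw : w ∈ supported ℂ ℂ (S₁' ∩ p ⁻¹' {s})) {b : B'} (hb : b ∈ w.support) :
    ∃ w' ∈ U, w' ∈ supported ℂ ℂ (S₁' ∩ p ⁻¹' {s₁}) ∧ s₁' ∈ w'.support ∧
      w'.support.card = w.support.card := by
  classical
  have hstart : ∀ {s : B} {w : B' →₀ ℂ}, w ∈ U → w ∈ supported ℂ ℂ (S₁' ∩ p ⁻¹' {s}) →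
      s₁' ∈ w.support → ∃ w' ∈ U, w' ∈ supported ℂ ℂ (S₁' ∩ p ⁻¹' {s₁}) ∧ s₁' ∈ w'.support ∧
        w'.support.card = w.support.card := by
    intro s w hwU hw h1
    obtain rfl : s = s₁ := ((hw h1).2 : p s₁' = s).symm.trans h.map₁
    exact ⟨w, hwU, hw, h1, rfl⟩
  induction hn : G'.dist b s₁' generalizing s w b with
  | zero => exact hstart hwU hw (h.isTree.connected.dist_eq_zero_iff.mp hn ▸ hb)
  | succ n ih =>
    by_cases h1 : s₁' ∈ w.support
    · exact hstart hwU hw h1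
    obtain ⟨c, hbc, hc⟩ :=
      h.isTree.connected.exists_adj_dist_add_one_eq (fun hb1 : b = s₁' => h1 (hb1 ▸ hb))
    have hst : (coxeterGraph M).Adj s (p c) := (hw hb).2 ▸ h.covering.adj hbc
    have hcw : c ∈ (mapDomain (neighborOver G' p · (p c)) w).support := by
      rw [h.covering.support_mapDomain_neighborOver hst fun _ hb => (hw hb).2]
      exact Finset.mem_image.mpr ⟨b, hb, h.covering.neighborOver_eq hbc⟩
    rw [← h.covering.card_support_mapDomain_neighborOver hst fun _ hb => (hw hb).2]
    exact ih (h.mapDomain_neighborOver_mem hst hw (fun _ => h1) (sub_mem (hU _ w hwU) hwU))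
      (h.mapDomain_neighborOver_mem_supported hst hw (fun _ => h1)) hcw (by omega)

theorem exists_card_support_add_one_eq (h : IsSec4Setup M G' p s₁ s₂ s₁' s₂')
    (hU : ∀ s, ∀ v ∈ U, σ s v ∈ U) {w : B' →₀ ℂ}
    (hwU : w ∈ U) (hw : w ∈ supported ℂ ℂ (S₁' ∩ p ⁻¹' {s₁})) (h1 : s₁' ∈ w.support) :
    ∃ w' ∈ U, w' ∈ supported ℂ ℂ (S₁' ∩ p ⁻¹' {s₂}) ∧ w'.support.card + 1 = w.support.card := by
  classical
  have hst : (coxeterGraph M).Adj s₁ s₂ := h.map₁ ▸ h.map₂ ▸ h.covering.adj h.adj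
  have hw₀ : w.erase s₁' ∈ supported ℂ ℂ (S₁' ∩ p ⁻¹' {s₁}) :=
    (mem_supported ℂ _).mpr (subset_trans (by simp [support_erase]) hw)
  have hcut : s₂ = s₂ → s₁' ∉ (w.erase s₁').support := fun _ => by simp
  have hsub : σ s₂ (w.erase s₁') - w.erase s₁' = σ s₂ w - w := by
    conv_rhs => rw [← single_add_erase s₁' w]
    rw [map_add, ← smul_single_one, map_smul, sec4Act_single_cut h.eq_four h.map₁]
    abel
  refine ⟨_, h.mapDomain_neighborOver_mem hst hw₀ hcut (hsub ▸ sub_mem (hU _ w hwU) hwU),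
    h.mapDomain_neighborOver_mem_supported hst hw₀ hcut, ?_⟩
  rw [h.covering.card_support_mapDomain_neighborOver hst fun _ hb => (hw₀ hb).2, support_erase,
    Finset.card_erase_add_one h1]

theorem single_start_mem (h : IsSec4Setup M G' p s₁ s₂ s₁' s₂')
    (hU : ∀ s, ∀ v ∈ U, σ s v ∈ U) {s : B} {w : B' →₀ ℂ} (hwU : w ∈ U)
    (hw : w ∈ supported ℂ ℂ (S₁' ∩ p ⁻¹' {s})) (hw0 : w ≠ 0) : single s₁' 1 ∈ U := by
  induction hn : w.support.card using Nat.strong_induction_on generalizing s w with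
  | _ n ih =>
  obtain ⟨b, hb⟩ := support_nonempty_iff.mpr hw0
  obtain ⟨w', hw'U, hw', h1, hcard⟩ := h.exists_mem_support_start hU hwU hw hb
  by_cases hn1 : w'.support.card = 1
  · obtain ⟨hne, hsingle⟩ := support_eq_singleton.mp
      (Finset.eq_singleton_iff_unique_mem.mpr
        ⟨h1, fun x hx => Finset.card_le_one.mp hn1.le x hx _ h1⟩)
    rw [hsingle] at hw'U
    simpa [smul_single, inv_mul_cancel₀ hne] using Submodule.smul_mem U (w' s₁')⁻¹ hw'U
  · obtain ⟨w'', hw''U, hw'', hcard'⟩ := h.exists_card_support_add_one_eq hU hw'U hw' h1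
    have hpos : 0 < w'.support.card := Finset.card_pos.mpr ⟨_, h1⟩
    exact ih _ (by omega) hw''U hw''
      (fun h0 => by rw [h0, support_zero, Finset.card_empty] at hcard'; omega) rfl

theorem supported_le_of_single_start_mem (h : IsSec4Setup M G' p s₁ s₂ s₁' s₂')
    (hU : ∀ s, ∀ v ∈ U, σ s v ∈ U)
    (h1 : single s₁' 1 ∈ U) : supported ℂ ℂ S₁' ≤ U := by
  rw [supported_eq_span_single, Submodule.span_le]
  rintro _ ⟨a, ha, rfl⟩
  induction hn : G'.dist a s₁' generalizing a with
  | zero => rwa [h.isTree.connected.dist_eq_zero_iff.mp hn]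
  | succ n ih =>
    have ha1 : a ≠ s₁' := fun ha1 => by simp [ha1] at hn
    obtain ⟨c, hac, hc⟩ := h.isTree.connected.exists_adj_dist_add_one_eq ha1
    have hcS : c ∈ S₁' := by
      by_contra hcS
      exact ha1 (h.isTree.eq_of_adj_of_mem_nearSide h.adj hac ha hcS).1
    have hcut : ¬(p a = s₂ ∧ c = s₁') := by
      rintro ⟨ha₂, rfl⟩
      have : a = s₂' := by
        rw [← h.covering.neighborOver_eq hac.symm, ha₂, ← h.map₂, h.covering.neighborOver_eq h.adj]
      exact notMem_nearSide_right _ _ (this ▸ ha)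
    have key := sec4Act_single_of_adj (s₁ := s₁) h.covering (h.covering.adj hac.symm)
      (ne_of_mem_of_not_mem hcS (notMem_nearSide_right _ _)) hcut
    have hcU : single c 1 ∈ U := ih c hcS (by omega)
    have := sub_mem (hU (p a) _ hcU) hcU
    rw [key, h.covering.neighborOver_eq hac.symm] at this
    exact (Submodule.smul_mem_iff U (h.coeff_ne_zero (h.covering.adj hac.symm))).mp this

end IsSec4Setup

theorem CoxeterSystem.apply_mem_of_forall_simple {B W k V : Type*} [Group W] [CommSemiring k]
    [AddCommMonoid V] [Module k V] {M : CoxeterMatrix B} (cs : CoxeterSystem M W)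
    (ρ : Representation k W V) (P : Submodule k V)
    (h : ∀ s, ∀ v ∈ P, ρ (cs.simple s) v ∈ P) (w : W) : ∀ v ∈ P, ρ w v ∈ P :=
  cs.simple_induction_left (p := fun w => ∀ v ∈ P, ρ w v ∈ P) w (by simp) fun w s hw v hv => by
    rw [map_mul, Module.End.mul_apply]
    exact h s _ (hw v hv)

theorem Representation.apply_mem_span_orbit {G k V : Type*} [Monoid G] [CommSemiring k]
    [AddCommMonoid V] [Module k V] (ρ : Representation k G V) (v : V) (g : G) {u : V}
    (hu : u ∈ Submodule.span k {u | ∃ w : G, ρ w v = u}) :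
    ρ g u ∈ Submodule.span k {u | ∃ w : G, ρ w v = u} := by
  have hle : Submodule.span k {u | ∃ w : G, ρ w v = u} ≤
      (Submodule.span k {u | ∃ w : G, ρ w v = u}).comap (ρ g) := by
    rw [Submodule.span_le]
    rintro _ ⟨w, rfl⟩
    exact Submodule.subset_span ⟨g * w, by rw [map_mul, Module.End.mul_apply]⟩
  exact hle hu

theorem statement7_general {B B' W : Type*} [Group W]
    (M : CoxeterMatrix B) (cs : CoxeterSystem M W)
    (hfin : ∀ s t : B, M s t ≠ 0)
    (s₁ s₂ : B)
    (G' : SimpleGraph B') (htree : G'.IsTree) (p : B' → B)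
    (hcover : ∀ a : B', Set.BijOn p (G'.neighborSet a) ((coxeterGraph M).neighborSet (p a)))
    (s₁' s₂' : B') (hedge : G'.Adj s₁' s₂') (hp₁ : p s₁' = s₁) (hp₂ : p s₂' = s₂)
    (ρ : Representation ℂ W (B' →₀ ℂ))
    (hρ : ∀ s : B, ρ (cs.simple s) = sec4Act M G' p s₁ s₂ s₁' s₂' s)
    (hm4 : M s₁ s₂ = 4) :
    (∀ w : W, ∀ v ∈ Finsupp.supported ℂ ℂ {a : B' | G'.dist a s₁' < G'.dist a s₂'},
      ρ w v ∈ Finsupp.supported ℂ ℂ {a : B' | G'.dist a s₁' < G'.dist a s₂'}) ∧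
    ∀ v₁ ∈ Finsupp.supported ℂ ℂ {a : B' | G'.dist a s₁' < G'.dist a s₂'},
      v₁ ∉ fixedSubmodule (sec4Act M G' p s₁ s₂ s₁' s₂') →
      Submodule.span ℂ {u | ∃ w : W, ρ w v₁ = u} =
        Finsupp.supported ℂ ℂ {a : B' | G'.dist a s₁' < G'.dist a s₂'} := by
  have h : IsSec4Setup M G' p s₁ s₂ s₁' s₂' := ⟨htree, hcover, hedge, hp₁, hp₂, hfin, hm4⟩
  have hV₁ : ∀ w : W, ∀ v ∈ supported ℂ ℂ (nearSide G' s₁' s₂'),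
      ρ w v ∈ supported ℂ ℂ (nearSide G' s₁' s₂') :=
    cs.apply_mem_of_forall_simple ρ _ fun s v hv => by
      rw [hρ]
      exact sec4Act_mem_supported htree hedge hp₁ hp₂ hm4 s hv
  refine ⟨hV₁, fun v₁ hv₁ hfix => ?_⟩
  set U := Submodule.span ℂ {u | ∃ w : W, ρ w v₁ = u}
  have hU : ∀ s, ∀ v ∈ U, sec4Act M G' p s₁ s₂ s₁' s₂' s v ∈ U :=
    fun s v hv => hρ s ▸ ρ.apply_mem_span_orbit v₁ (cs.simple s) hv
  have hv₁U : v₁ ∈ U := Submodule.subset_span ⟨1, by rw [map_one, Module.End.one_apply]⟩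
  obtain ⟨s₀, hs₀⟩ : ∃ s, sec4Act M G' p s₁ s₂ s₁' s₂' s v₁ ≠ v₁ := by
    simpa [fixedSubmodule] using hfix
  have hstart : single s₁' 1 ∈ U := h.single_start_mem hU (sub_mem (hU s₀ v₁ hv₁U) hv₁U)
    (sec4Act_sub_self_mem htree hedge hp₁ hp₂ hm4 s₀ hv₁) (sub_ne_zero.mpr hs₀)
  refine le_antisymm ?_ (h.supported_le_of_single_start_mem hU hstart)
  rw [Submodule.span_le]
  rintro _ ⟨w, rfl⟩
  exact hV₁ w v₁ hv₁

/-- under the Section 4 assumptions, with `ρ` the resulting representation of `W`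
on `V = B' →₀ ℂ`, `V₀ = {v ∈ V : s·v = v for all s ∈ S}`,
`S₁′ = {a ∈ S′ : d(a,s₁′) < d(a,s₂′)}` (distances in the tree `G′`) and
`V₁ = ⊕_{a ∈ S₁′} ℂ α_a`: if `m = m_{s₁s₂} = 4`, then `V₁` is a `W`-subrepresentation of `V`,
and for every `v₁ ∈ V₁ ∖ V₀` the `W`-subrepresentation generated by `v₁` is all of `V₁`. -/
theorem statement7 {B B' W : Type*} [Group W] [Fintype B]
    (M : CoxeterMatrix B) (cs : CoxeterSystem M W)
    (hfin : ∀ s t : B, M s t ≠ 0)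
    (hconn : (coxeterGraph M).Connected)
    (hnottree : ¬ (coxeterGraph M).IsTree)
    (s₁ s₂ : B) (hm : 4 ≤ M s₁ s₂)
    (G' : SimpleGraph B') (htree : G'.IsTree) (p : B' → B)
    (hmorph : ∀ a b : B', G'.Adj a b → (coxeterGraph M).Adj (p a) (p b))
    (hsurj : Function.Surjective p)
    (hcover : ∀ a : B', Set.BijOn p (G'.neighborSet a) ((coxeterGraph M).neighborSet (p a)))
    (s₁' s₂' : B') (hedge : G'.Adj s₁' s₂') (hp₁ : p s₁' = s₁) (hp₂ : p s₂' = s₂)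
    (ρ : Representation ℂ W (B' →₀ ℂ))
    (hρ : ∀ s : B, ρ (cs.simple s) = sec4Act M G' p s₁ s₂ s₁' s₂' s)
    (hm4 : M s₁ s₂ = 4) :
    (∀ w : W, ∀ v ∈ Finsupp.supported ℂ ℂ {a : B' | G'.dist a s₁' < G'.dist a s₂'},
      ρ w v ∈ Finsupp.supported ℂ ℂ {a : B' | G'.dist a s₁' < G'.dist a s₂'}) ∧
    ∀ v₁ ∈ Finsupp.supported ℂ ℂ {a : B' | G'.dist a s₁' < G'.dist a s₂'},
      v₁ ∉ fixedSubmodule (sec4Act M G' p s₁ s₂ s₁' s₂') →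
      Submodule.span ℂ {u | ∃ w : W, ρ w v₁ = u} =
        Finsupp.supported ℂ ℂ {a : B' | G'.dist a s₁' < G'.dist a s₂'} :=
  statement7_general M cs hfin s₁ s₂ G' htree p hcover s₁' s₂' hedge hp₁ hp₂ ρ hρ hm4
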